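/- Let S be a truncation set, π : A → R a surjective homomorphism of commutative rings with kernel I, and assume A has no S-torsion. Then for all a, b ∈ A^S one has Ψ_S(a) − Ψ_S(b) ∈ X_S(I) if and only if π(a_n) = π(b_n) for all n ∈ S. Consequently Ψ_S induces a well-defined bijection ψ_S : R^S → X_S(A)/X_S(I), r ↦ Ψ_S(ã) mod X_S(I) for any componentwise lift ã of r. -/

import Mathlib

/-- `S/n = {ν : νn ∈ S}`. -/
def truncDiv (S : Set ℕ) (n : ℕ) : Set ℕ := {ν | ν * n ∈ S}

/-- A truncation set: a nonempty set of positive integers closed under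
taking positive divisors. -/
def IsTruncationSet (S : Set ℕ) : Prop :=
  S.Nonempty ∧ (∀ n ∈ S, 0 < n) ∧ ∀ n ∈ S, ∀ d : ℕ, d ∣ n → 0 < d → d ∈ S

/-- Verschiebung `V_n : A^{S/n} → A^S`. -/
def Versch {A : Type*} [CommRing A] (S : Set ℕ) (n : ℕ)
    (a : truncDiv S n → A) : S → A :=
  fun μ =>
    if h : n ∣ μ.1 then
      (n : A) * a ⟨μ.1 / n, show μ.1 / n * n ∈ S by
        rw [Nat.div_mul_cancel h]; exact μ.2⟩
    else 0

/-- `X_S(J)` as an additive subgroup of `A^S`: the topological closure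
(`A` discrete, `A^S` with the product topology) of the subgroup generated by
the elements `V_n⟨a⟩`, `n ∈ S`, `a ∈ J`. -/
def XSgrp (S : Set ℕ) {A : Type*} [CommRing A] (J : Set A) :
    AddSubgroup (S → A) :=
  letI : TopologicalSpace A := ⊥
  haveI : DiscreteTopology A := ⟨rfl⟩
  (AddSubgroup.closure
    {x | ∃ n ∈ S, ∃ a ∈ J, x = Versch S n fun ν => a ^ ν.1}).topologicalClosure

open Classical in
/-- `Ψ_S : A^S → A^S`, `Ψ_S(a)_m = ∑_{n ∈ S, n ∣ m} n·a_n^{m/n}`. -/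
noncomputable def PsiS (S : Set ℕ) {A : Type*} [CommRing A] (a : S → A) :
    S → A :=
  fun m => ∑ n ∈ ((m : ℕ).divisors.filter (· ∈ S)).attach,
    (n.1 : A) * (a ⟨n.1, (Finset.mem_filter.mp n.2).2⟩) ^ ((m : ℕ) / n.1)


/-!
Encode `a : ℕ → A` as the power series `∏_{n ≥ 1} (1 - a_n X^n)`. Every series with constant
coefficient `1` arises from exactly one such family (up to `a 0`), and the coefficients of the
logarithmic derivative `-X f' / f` of the product are the ghost components `∑_{d ∣ m} d a_d^{m/d}`,
i.e. the components of `Ψ`. Multiplying series therefore adds ghost components, and since reducing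
coefficients along a ring map is multiplicative on series, the family whose series is the quotient
of the series of two families congruent modulo `ker π` lies in `ker π`.

Each generator `V_n⟨a⟩` is the ghost vector of the family supported at `n` with value `a`, so every
element of the subgroup generated by the `V_n⟨a⟩` with `a ∈ I` is a ghost vector of a family in `I`.
An element of the closure `X_S(I)` is matched on the divisors of each `n ∈ S` by such a ghost
vector; without `S`-torsion the ghost components determine the coordinates one divisor at a time, so
these local families glue to a single one. Hence `X_S(I) = Ψ_S(I^S)`, and both claims follow by
comparing coordinates after reduction along `π`.
-/

open PowerSeries Finset

namespace PowerSeries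

section CommSemiring

variable {A : Type*} [CommSemiring A]

noncomputable def eulerDeriv (f : A⟦X⟧) : A⟦X⟧ :=
  X * d⁄dX A f

theorem coeff_eulerDeriv (f : A⟦X⟧) (n : ℕ) : coeff n (eulerDeriv f) = n * coeff n f := by
  cases n with
  | zero => simp [eulerDeriv]
  | succ n => rw [eulerDeriv, coeff_succ_X_mul, coeff_derivative, mul_comm]; push_cast; rfl

theorem eulerDeriv_mul (f g : A⟦X⟧) :
    eulerDeriv (f * g) = eulerDeriv f * g + f * eulerDeriv g := by
  rw [eulerDeriv, eulerDeriv, eulerDeriv, Derivation.leibniz, smul_eq_mul, smul_eq_mul]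
  ring

end CommSemiring

variable {A : Type*} [CommRing A]

noncomputable abbrev modXPow (N : ℕ) : A⟦X⟧ →+* A⟦X⟧ ⧸ Ideal.span {(X : A⟦X⟧) ^ N} :=
  Ideal.Quotient.mk _

theorem modXPow_eq_iff {N : ℕ} {f g : A⟦X⟧} :
    modXPow N f = modXPow N g ↔ ∀ k < N, coeff k f = coeff k g := by
  simp only [Ideal.Quotient.eq, Ideal.mem_span_singleton, X_pow_dvd_iff, map_sub, sub_eq_zero]

theorem eq_of_forall_modXPow_eq {f g : A⟦X⟧} (h : ∀ N, modXPow (N + 1) f = modXPow (N + 1) g) :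
    f = g :=
  ext fun k => modXPow_eq_iff.mp (h k) k k.lt_succ_self

theorem modXPow_X_pow {N n : ℕ} (h : N ≤ n) : modXPow N (X ^ n : A⟦X⟧) = 0 :=
  Ideal.Quotient.eq_zero_iff_mem.mpr (Ideal.mem_span_singleton.mpr (pow_dvd_pow X h))

theorem modXPow_eulerDeriv {N : ℕ} {f g : A⟦X⟧} (h : modXPow N f = modXPow N g) :
    modXPow N (eulerDeriv f) = modXPow N (eulerDeriv g) :=
  modXPow_eq_iff.mpr fun k hk => by
    rw [coeff_eulerDeriv, coeff_eulerDeriv, modXPow_eq_iff.mp h k hk]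

end PowerSeries

namespace BigWitt

variable {A B : Type*} [CommRing A] [CommRing B]

noncomputable def partialSeries (a : ℕ → A) (N : ℕ) : A⟦X⟧ :=
  ∏ n ∈ Ioc 0 N, (1 - C (a n) * X ^ n)

/-- The infinite product `∏_{n ≥ 1} (1 - a_n X^n)`, whose `N`-th coefficient only involves the
factors with `n ≤ N`. The coordinate `a 0` is never used. -/
noncomputable def series (a : ℕ → A) : A⟦X⟧ :=
  mk fun N => coeff N (partialSeries a N)

-- The guard `k ≤ n` only makes the recursion visibly well founded (see `coords_succ`).
noncomputable def coords (f : A⟦X⟧) : ℕ → A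
  | 0 => 0
  | n + 1 => coeff (n + 1) (partialSeries (fun k => if k ≤ n then coords f k else 0) n)
      - coeff (n + 1) f

theorem coords_succ (f : A⟦X⟧) (n : ℕ) :
    coords f (n + 1) = coeff (n + 1) (partialSeries (coords f) n) - coeff (n + 1) f := by
  rw [coords]
  congr 2
  refine prod_congr rfl fun k hk => ?_
  dsimp only
  rw [if_pos (mem_Ioc.mp hk).2]

theorem constantCoeff_partialSeries (a : ℕ → A) (N : ℕ) :
    constantCoeff (partialSeries a N) = 1 := by
  refine (map_prod _ _ _).trans (prod_eq_one fun n hn => ?_)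
  simp [(mem_Ioc.mp hn).1.ne']

theorem partialSeries_succ (a : ℕ → A) (N : ℕ) :
    partialSeries a (N + 1) = partialSeries a N * (1 - C (a (N + 1)) * X ^ (N + 1)) :=
  prod_Ioc_succ_top N.zero_le _

theorem coeff_partialSeries_succ (a : ℕ → A) (N : ℕ) :
    coeff (N + 1) (partialSeries a (N + 1)) = coeff (N + 1) (partialSeries a N) - a (N + 1) := by
  rw [partialSeries_succ, mul_sub, mul_one, map_sub, mul_left_comm, coeff_C_mul,
    coeff_mul_X_pow', if_pos le_rfl, Nat.sub_self, coeff_zero_eq_constantCoeff,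
    constantCoeff_partialSeries, mul_one]

theorem modXPow_partialSeries (a : ℕ → A) {N M : ℕ} (h : N ≤ M) :
    modXPow (N + 1) (partialSeries a M) = modXPow (N + 1) (partialSeries a N) := by
  have htail : modXPow (N + 1) (∏ n ∈ Ioc N M, (1 - C (a n) * X ^ n)) = 1 := by
    refine (map_prod _ _ _).trans (prod_eq_one fun n hn => ?_)
    rw [map_sub, map_mul, modXPow_X_pow (mem_Ioc.mp hn).1, mul_zero, sub_zero, map_one]
  rw [partialSeries, ← prod_Ioc_consecutive _ N.zero_le h, map_mul, htail, mul_one]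
  rfl

theorem modXPow_series (a : ℕ → A) (N : ℕ) :
    modXPow (N + 1) (series a) = modXPow (N + 1) (partialSeries a N) := by
  refine modXPow_eq_iff.mpr fun k hk => ?_
  rw [series, coeff_mk]
  exact modXPow_eq_iff.mp (modXPow_partialSeries a (Nat.le_of_lt_succ hk)).symm k k.lt_succ_self

theorem constantCoeff_series (a : ℕ → A) : constantCoeff (series a) = 1 := by
  rw [← coeff_zero_eq_constantCoeff_apply, series, coeff_mk, coeff_zero_eq_constantCoeff_apply,
    constantCoeff_partialSeries]

theorem isUnit_series (a : ℕ → A) : IsUnit (series a) :=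
  isUnit_iff_constantCoeff.mpr ((constantCoeff_series a).symm ▸ isUnit_one)

theorem series_congr {a b : ℕ → A} (h : ∀ n ≠ 0, a n = b n) : series a = series b := by
  refine congrArg mk (funext fun N => congrArg (coeff N) (prod_congr rfl fun n hn => ?_))
  rw [h n (mem_Ioc.mp hn).1.ne']

theorem series_zero : series (0 : ℕ → A) = 1 := by
  ext N
  simp [series, partialSeries]

theorem map_series (φ : A →+* B) (a : ℕ → A) : map φ (series a) = series (φ ∘ a) := by
  ext N
  rw [coeff_map, series, series, coeff_mk, coeff_mk, ← coeff_map, partialSeries, partialSeries,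
    map_prod]
  simp

theorem eq_of_series_eq {a b : ℕ → A} (h : series a = series b) {n : ℕ} (hn : n ≠ 0) :
    a n = b n := by
  induction n using Nat.strong_induction_on with
  | _ n ih =>
    obtain ⟨n, rfl⟩ := Nat.exists_eq_succ_of_ne_zero hn
    have hpartial : partialSeries a n = partialSeries b n :=
      prod_congr rfl fun k hk => by
        rw [ih k (Nat.lt_succ_of_le (mem_Ioc.mp hk).2) (mem_Ioc.mp hk).1.ne']
    have hcoeff := congrArg (coeff (n + 1)) h
    simp only [series, coeff_mk, coeff_partialSeries_succ, hpartial] at hcoeff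
    exact sub_right_injective hcoeff

theorem series_coords {f : A⟦X⟧} (hf : constantCoeff f = 1) : series (coords f) = f := by
  ext N
  rw [series, coeff_mk]
  cases N with
  | zero =>
    rw [coeff_zero_eq_constantCoeff_apply, coeff_zero_eq_constantCoeff_apply,
      constantCoeff_partialSeries, hf]
  | succ n => rw [coeff_partialSeries_succ, coords_succ, sub_sub_cancel]

def ghost (a : ℕ → A) (m : ℕ) : A :=
  ∑ d ∈ m.divisors, (d : A) * a d ^ (m / d)

-- `vSeries n x = n x X^n / (1 - x X^n)` is the contribution of one factor to `-X f' / f`.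
noncomputable def vSeries (n : ℕ) (x : A) : A⟦X⟧ :=
  mk fun m => if n ∣ m ∧ m ≠ 0 then n * x ^ (m / n) else 0

theorem one_sub_mul_vSeries {n : ℕ} (hn : n ≠ 0) (x : A) :
    (1 - C x * X ^ n) * vSeries n x = C (n * x) * X ^ n := by
  ext m
  rw [sub_mul, one_mul, mul_assoc, map_sub, coeff_C_mul, coeff_X_pow_mul', coeff_C_mul_X_pow]
  rcases lt_or_ge m n with hmn | hnm
  · have hndvd : ¬ (n ∣ m ∧ m ≠ 0) := fun h => h.2 (Nat.eq_zero_of_dvd_of_lt h.1 hmn)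
    simp [vSeries, hndvd, hmn.not_ge, hmn.ne]
  obtain ⟨k, rfl⟩ := Nat.exists_eq_add_of_le hnm
  have hV : ∀ j, coeff j (vSeries n x) = if n ∣ j ∧ j ≠ 0 then n * x ^ (j / n) else 0 :=
    fun j => coeff_mk _ _
  rw [if_pos hnm, Nat.add_sub_cancel_left, hV, hV]
  rcases eq_or_ne k 0 with rfl | hk
  · simp [Nat.div_self (Nat.pos_of_ne_zero hn), hn]
  rw [if_neg (by omega : n + k ≠ n)]
  by_cases hdvd : n ∣ k
  · rw [if_pos ⟨Nat.dvd_add_self_left.mpr hdvd, by omega⟩, if_pos ⟨hdvd, hk⟩,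
      Nat.add_div_left k (Nat.pos_of_ne_zero hn)]
    ring
  · rw [if_neg fun h => hdvd (Nat.dvd_add_self_left.mp h.1), if_neg fun h => hdvd h.1]
    ring

theorem eulerDeriv_one_sub_C_mul_X_pow {n : ℕ} (hn : n ≠ 0) (x : A) :
    eulerDeriv (1 - C x * X ^ n) = -((1 - C x * X ^ n) * vSeries n x) := by
  rw [one_sub_mul_vSeries hn]
  ext m
  rw [coeff_eulerDeriv, map_neg, map_sub, coeff_one, coeff_C_mul_X_pow, coeff_C_mul_X_pow]
  split_ifs with h0 hm <;> simp_all

theorem eulerDeriv_partialSeries (a : ℕ → A) (N : ℕ) :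
    eulerDeriv (partialSeries a N) = -(partialSeries a N * ∑ n ∈ Ioc 0 N, vSeries n (a n)) := by
  induction N with
  | zero => simp [partialSeries, eulerDeriv]
  | succ N ih =>
    rw [partialSeries_succ, sum_Ioc_succ_top N.zero_le, eulerDeriv_mul, ih,
      eulerDeriv_one_sub_C_mul_X_pow (by omega : N + 1 ≠ 0)]
    ring

theorem coeff_sum_vSeries (a : ℕ → A) {m N : ℕ} (hm : m ≤ N) :
    coeff m (∑ n ∈ Ioc 0 N, vSeries n (a n)) = ghost a m := by
  simp only [map_sum, vSeries, coeff_mk, ghost]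
  rw [← sum_filter]
  refine sum_congr (ext fun d => ?_) fun _ _ => rfl
  simp only [mem_filter, mem_Ioc, Nat.mem_divisors]
  refine ⟨fun h => h.2, fun ⟨hdm, hm0⟩ => ⟨⟨Nat.pos_of_dvd_of_pos hdm (Nat.pos_of_ne_zero hm0),
    (Nat.le_of_dvd (Nat.pos_of_ne_zero hm0) hdm).trans hm⟩, hdm, hm0⟩⟩

theorem eulerDeriv_series (a : ℕ → A) : eulerDeriv (series a) = -(series a * mk (ghost a)) := by
  refine eq_of_forall_modXPow_eq fun N => ?_
  have hghost :
      modXPow (N + 1) (mk (ghost a)) = modXPow (N + 1) (∑ n ∈ Ioc 0 N, vSeries n (a n)) :=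
    modXPow_eq_iff.mpr fun k hk => by rw [coeff_mk, coeff_sum_vSeries a (Nat.le_of_lt_succ hk)]
  rw [modXPow_eulerDeriv (modXPow_series a N), eulerDeriv_partialSeries, map_neg, map_mul,
    map_neg, map_mul, hghost, modXPow_series]

theorem ghost_add_of_series_eq_mul {a b c : ℕ → A} (h : series c = series a * series b) :
    ghost c = ghost a + ghost b := by
  have hcancel : series c * mk (ghost c) = series c * (mk (ghost a) + mk (ghost b)) := by
    have hD := eulerDeriv_series c
    rw [h, eulerDeriv_mul, eulerDeriv_series, eulerDeriv_series] at hD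
    rw [h]
    linear_combination hD
  funext m
  simpa using congrArg (coeff m) ((isUnit_series c).mul_left_cancel hcancel)

theorem eq_of_ghost_eq {a b : ℕ → A} {n : ℕ} (hn : n ≠ 0)
    (hreg : ∀ d, d ∣ n → IsLeftRegular (d : A)) (h : ∀ d, d ∣ n → ghost a d = ghost b d) :
    a n = b n := by
  induction n using Nat.strong_induction_on with
  | _ n ih =>
    have hproper : ∀ d ∈ n.properDivisors, (d : A) * a d ^ (n / d) = d * b d ^ (n / d) := by
      intro d hd
      obtain ⟨hdn, hlt⟩ := Nat.mem_properDivisors.mp hd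
      rw [ih d hlt (Nat.pos_of_mem_properDivisors hd).ne'
        (fun e he => hreg e (he.trans hdn)) (fun e he => h e (he.trans hdn))]
    have hn' := h n dvd_rfl
    rw [ghost, ghost, ← Nat.cons_self_properDivisors hn, sum_cons, sum_cons, sum_congr rfl hproper,
      Nat.div_self (Nat.pos_of_ne_zero hn), pow_one, pow_one] at hn'
    exact hreg n dvd_rfl (add_right_cancel hn')

theorem exists_series_mul_eq (a b : ℕ → A) : ∃ c, series c * series b = series a := by
  obtain ⟨w, hw⟩ := (isUnit_series b).exists_right_inv
  have hw₀ : constantCoeff w = 1 := by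
    simpa [constantCoeff_series] using congrArg constantCoeff hw
  refine ⟨coords (series a * w), ?_⟩
  rw [series_coords (by rw [map_mul, constantCoeff_series, hw₀, one_mul]), mul_assoc, mul_comm w,
    hw, mul_one]

theorem exists_ghost_eq_sub (φ : A →+* B) {a b : ℕ → A} (hab : ∀ n ≠ 0, φ (a n) = φ (b n)) :
    ∃ c, (∀ n ≠ 0, φ (c n) = 0) ∧ ghost c = ghost a - ghost b := by
  obtain ⟨c, hc⟩ := exists_series_mul_eq a b
  refine ⟨c, fun n hn => ?_, eq_sub_of_add_eq (ghost_add_of_series_eq_mul hc.symm).symm⟩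
  have hφ := congrArg (map φ) hc
  rw [map_mul, map_series, map_series, map_series,
    series_congr (a := φ ∘ a) (b := φ ∘ b) hab] at hφ
  have hφc : series (φ ∘ c) = series 0 := by
    rw [series_zero]; exact (isUnit_series _).mul_right_cancel (hφ.trans (one_mul _).symm)
  exact eq_of_series_eq hφc hn

theorem exists_ghost_eq_sub_of_map_eq_zero (φ : A →+* B) {a b : ℕ → A}
    (hb : ∀ n ≠ 0, φ (b n) = 0) :
    ∃ c, (∀ n ≠ 0, φ (c n) = φ (a n)) ∧ ghost c = ghost a - ghost b := by
  obtain ⟨c, hc⟩ := exists_series_mul_eq a b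
  refine ⟨c, fun n hn => ?_, eq_sub_of_add_eq (ghost_add_of_series_eq_mul hc.symm).symm⟩
  have hφ := congrArg (map φ) hc
  rw [map_mul, map_series, map_series, map_series, series_congr (a := φ ∘ b) (b := 0) hb,
    series_zero, mul_one] at hφ
  exact eq_of_series_eq hφ hn

theorem ghost_zero : ghost (0 : ℕ → A) = 0 :=
  funext fun m => sum_eq_zero fun d hd => by
    rw [Pi.zero_apply, zero_pow (Nat.div_pos (Nat.divisor_le hd) (Nat.pos_of_mem_divisors hd)).ne',
      mul_zero]

theorem ghost_single (x : A) {n m : ℕ} (hm : m ≠ 0) :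
    ghost (Pi.single n x : ℕ → A) m = if n ∣ m then n * x ^ (m / n) else 0 := by
  have hterm : ∀ d ∈ m.divisors, d ≠ n → (d : A) * (Pi.single n x : ℕ → A) d ^ (m / d) = 0 :=
    fun d hd hdn => by
    rw [Pi.single_eq_of_ne hdn, zero_pow (Nat.div_pos (Nat.divisor_le hd)
      (Nat.pos_of_mem_divisors hd)).ne', mul_zero]
  split_ifs with hnm
  · rw [ghost, sum_eq_single n hterm fun h => (h (Nat.mem_divisors.mpr ⟨hnm, hm⟩)).elim,
      Pi.single_eq_same]
  · exact sum_eq_zero fun d hd => hterm d hd fun h => hnm (h ▸ Nat.dvd_of_mem_divisors hd)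

end BigWitt

theorem mem_closure_iff_forall_finset {ι A : Type*} [TopologicalSpace A] [DiscreteTopology A]
    {s : Set (ι → A)} {x : ι → A} :
    x ∈ closure s ↔ ∀ F : Finset ι, ∃ g ∈ s, ∀ i ∈ F, g i = x i := by
  rw [mem_closure_iff]
  constructor
  · intro h F
    obtain ⟨g, hgF, hgs⟩ := h _ (isOpen_set_pi F.finite_toSet fun _ _ => isOpen_discrete {x _})
      (Set.mem_pi.mpr fun _ _ => rfl)
    exact ⟨g, hgs, hgF⟩
  · intro h o ho hxo
    obtain ⟨I, u, hu, hIu⟩ := isOpen_pi_iff.mp ho x hxo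
    obtain ⟨g, hgs, hgI⟩ := h I
    exact ⟨g, hIu fun i hi => (hgI i hi).symm ▸ (hu i hi).2, hgs⟩

open BigWitt

section TruncationSet

variable {A B : Type*} [CommRing A] [CommRing B] {S : Set ℕ}

theorem IsTruncationSet.ne_zero (hS : IsTruncationSet S) {n : ℕ} (hn : n ∈ S) : n ≠ 0 :=
  (hS.2.1 n hn).ne'

theorem IsTruncationSet.mem_of_dvd (hS : IsTruncationSet S) {n d : ℕ} (hn : n ∈ S) (hd : d ∣ n) :
    d ∈ S :=
  hS.2.2 n hn d hd (Nat.pos_of_dvd_of_pos hd (hS.2.1 n hn))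

def verschGenerators (S : Set ℕ) (J : Set A) : Set (S → A) :=
  {x | ∃ n ∈ S, ∃ a ∈ J, x = Versch S n fun ν => a ^ ν.1}

theorem mem_XSgrp_iff {J : Set A} {x : S → A} :
    x ∈ XSgrp S J ↔
      ∀ F : Finset S, ∃ g ∈ AddSubgroup.closure (verschGenerators S J), ∀ i ∈ F, g i = x i :=
  letI : TopologicalSpace A := ⊥
  haveI : DiscreteTopology A := ⟨rfl⟩
  mem_closure_iff_forall_finset

theorem Versch_pow_apply (n : ℕ) (x : A) (m : S) :
    Versch S n (fun ν => x ^ ν.1) m = if n ∣ m then n * x ^ (m.1 / n) else 0 := by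
  unfold Versch
  split_ifs <;> rfl

theorem PsiS_congr {a b : S → A} {m : S} (h : ∀ d : S, d.1 ∣ m.1 → a d = b d) :
    PsiS S a m = PsiS S b m := by
  classical
  exact sum_congr rfl fun d _ => by rw [h _ (Nat.dvd_of_mem_divisors (mem_filter.mp d.2).1)]

theorem PsiS_apply (hS : IsTruncationSet S) (z : ℕ → A) (m : S) :
    PsiS S (fun n => z n) m = ghost z m := by
  classical
  refine (sum_attach _ fun d : ℕ => (d : A) * z d ^ (m.1 / d)).trans ?_
  rw [filter_true_of_mem fun d hd => hS.mem_of_dvd m.2 (Nat.dvd_of_mem_divisors hd)]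
  rfl

open Classical in
noncomputable def extendByZero (S : Set ℕ) (a : S → A) (n : ℕ) : A :=
  if h : n ∈ S then a ⟨n, h⟩ else 0

theorem extendByZero_coe (a : S → A) (n : S) : extendByZero S a n = a n :=
  dif_pos n.2

theorem map_extendByZero (φ : A →+* B) (a : S → A) (n : ℕ) :
    φ (extendByZero S a n) = extendByZero S (φ ∘ a) n := by
  unfold extendByZero
  split_ifs <;> simp

theorem PsiS_eq_ghost_extendByZero (hS : IsTruncationSet S) (a : S → A) (m : S) :
    PsiS S a m = ghost (extendByZero S a) m := by
  rw [← PsiS_apply hS]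
  exact PsiS_congr fun d _ => (extendByZero_coe a d).symm

def ghostImage (S : Set ℕ) (J : Ideal A) : AddSubgroup (S → A) :=
  AddSubgroup.ofSub {x | ∃ z : ℕ → A, (∀ n ≠ 0, z n ∈ J) ∧ ∀ m : S, ghost z m = x m}
    ⟨0, 0, fun _ _ => J.zero_mem, fun m => by rw [ghost_zero]; rfl⟩
    fun x ⟨a, ha, hax⟩ y ⟨b, hb, hby⟩ => by
      obtain ⟨c, hc, hcg⟩ := exists_ghost_eq_sub (Ideal.Quotient.mk J) (a := a) (b := b)
        fun n hn => by rw [Ideal.Quotient.eq_zero_iff_mem.mpr (ha n hn),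
          Ideal.Quotient.eq_zero_iff_mem.mpr (hb n hn)]
      refine ⟨c, fun n hn => Ideal.Quotient.eq_zero_iff_mem.mp (hc n hn), fun m => ?_⟩
      rw [hcg, Pi.sub_apply, hax, hby, ← sub_eq_add_neg, Pi.sub_apply]

theorem closure_verschGenerators_le_ghostImage (hS : IsTruncationSet S) (J : Ideal A) :
    AddSubgroup.closure (verschGenerators S (J : Set A)) ≤ ghostImage S J := by
  rw [AddSubgroup.closure_le]
  rintro _ ⟨n, -, x, hx, rfl⟩
  refine ⟨Pi.single n x, fun k _ => ?_, fun m => ?_⟩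
  · rcases eq_or_ne k n with rfl | hkn
    · rwa [Pi.single_eq_same]
    · rw [Pi.single_eq_of_ne hkn]; exact J.zero_mem
  · rw [ghost_single x (hS.ne_zero m.2), Versch_pow_apply]

theorem exists_PsiS_eq_of_mem_XSgrp (hS : IsTruncationSet S) (htf : ∀ n ∈ S, IsLeftRegular (n : A))
    (J : Ideal A) {x : S → A} (hx : x ∈ XSgrp S (J : Set A)) :
    ∃ c : S → A, (∀ n, c n ∈ J) ∧ PsiS S c = x := by
  classical
  have hlocal : ∀ n : S, ∃ z : ℕ → A,
      (∀ k ≠ 0, z k ∈ J) ∧ ∀ d : S, d.1 ∣ n.1 → ghost z d = x d := by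
    intro n
    obtain ⟨g, hg, hgx⟩ := mem_XSgrp_iff.mp hx (n.1.divisors.subtype (· ∈ S))
    obtain ⟨z, hzJ, hz⟩ := closure_verschGenerators_le_ghostImage hS J hg
    exact ⟨z, hzJ, fun d hd => (hz d).trans
      (hgx d (mem_subtype.mpr (Nat.mem_divisors.mpr ⟨hd, hS.ne_zero n.2⟩)))⟩
  choose z hzJ hz using hlocal
  refine ⟨fun n => z n n, fun n => hzJ n n (hS.ne_zero n.2), funext fun m => ?_⟩
  rw [PsiS_congr (b := fun n => z m n), PsiS_apply hS, hz m m dvd_rfl]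
  intro d hdm
  refine eq_of_ghost_eq (hS.ne_zero d.2) (fun e he => htf e (hS.mem_of_dvd d.2 he)) fun e he => ?_
  have heS := hS.mem_of_dvd d.2 he
  rw [hz d ⟨e, heS⟩ he, hz m ⟨e, heS⟩ (he.trans hdm)]

theorem PsiS_mem_XSgrp (hS : IsTruncationSet S) (J : Set A) (c : S → A) (hc : ∀ n, c n ∈ J) :
    PsiS S c ∈ XSgrp S J := by
  classical
  refine mem_XSgrp_iff.mpr fun F => ?_
  let D : Finset S := F.biUnion fun m => m.1.divisors.subtype (· ∈ S)
  refine ⟨∑ d ∈ D, Versch S d (fun ν => c d ^ ν.1),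
    sum_mem fun d _ => AddSubgroup.subset_closure ⟨d, d.2, c d, hc d, rfl⟩, fun m hm => ?_⟩
  have hD : D.filter (fun d : S => d.1 ∣ m.1) = m.1.divisors.subtype (· ∈ S) := by
    ext d
    simp only [D, mem_filter, mem_biUnion, mem_subtype, Nat.mem_divisors]
    exact ⟨fun h => ⟨h.2, hS.ne_zero m.2⟩, fun h => ⟨⟨m, hm, h.1, hS.ne_zero m.2⟩, h.1⟩⟩
  rw [Finset.sum_apply]
  simp only [Versch_pow_apply]
  rw [← sum_filter, hD, PsiS_eq_ghost_extendByZero hS, ghost,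
    ← sum_subtype_of_mem _ fun d hd => hS.mem_of_dvd m.2 (Nat.dvd_of_mem_divisors hd)]
  exact sum_congr rfl fun d _ => by rw [extendByZero_coe]

theorem exists_PsiS_sub_eq (hS : IsTruncationSet S) (φ : A →+* B) {a b : S → A}
    (hab : ∀ n, φ (a n) = φ (b n)) :
    ∃ c : S → A, (∀ n, φ (c n) = 0) ∧ PsiS S a - PsiS S b = PsiS S c := by
  obtain ⟨c, hc, hcg⟩ := exists_ghost_eq_sub φ (a := extendByZero S a) (b := extendByZero S b)
    fun n _ => by rw [map_extendByZero, map_extendByZero, show φ ∘ a = φ ∘ b from funext hab]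
  refine ⟨fun n => c n, fun n => hc n (hS.ne_zero n.2), funext fun m => ?_⟩
  rw [Pi.sub_apply, PsiS_eq_ghost_extendByZero hS, PsiS_eq_ghost_extendByZero hS, PsiS_apply hS,
    hcg, Pi.sub_apply]

theorem map_eq_of_PsiS_sub_eq (hS : IsTruncationSet S) (htf : ∀ n ∈ S, IsLeftRegular (n : A))
    (φ : A →+* B) {a b c : S → A} (hc : ∀ n, φ (c n) = 0) (h : PsiS S a - PsiS S b = PsiS S c)
    (n : S) : φ (a n) = φ (b n) := by
  obtain ⟨e, he, heg⟩ := exists_ghost_eq_sub_of_map_eq_zero φ (a := extendByZero S a)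
    (b := extendByZero S c) fun k _ => by
      rw [map_extendByZero, show φ ∘ c = 0 from funext hc]
      unfold extendByZero
      split_ifs <;> rfl
  have hghost : ∀ d, d ∣ n.1 → ghost e d = ghost (extendByZero S b) d := by
    intro d hd
    have hd' := congrFun h ⟨d, hS.mem_of_dvd n.2 hd⟩
    simp only [Pi.sub_apply, PsiS_eq_ghost_extendByZero hS] at hd'
    rw [heg, Pi.sub_apply, ← hd', sub_sub_cancel]
  have hen : e n = extendByZero S b n :=
    eq_of_ghost_eq (hS.ne_zero n.2) (fun d hd => htf d (hS.mem_of_dvd n.2 hd)) hghost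
  rw [← extendByZero_coe a, ← he n (hS.ne_zero n.2), hen, extendByZero_coe]

end TruncationSet

theorem statement6_general {A R : Type*} [CommRing A] [CommRing R] (S : Set ℕ)
    (hS : IsTruncationSet S)
    (htf : ∀ n ∈ S, Function.Injective fun x : A => (n : A) * x)
    (π : A →+* R) :
    (∀ a b : ↥S → A,
      PsiS S a - PsiS S b ∈ XSgrp S (RingHom.ker π : Set A) ↔
        ∀ n : ↥S, π (a n) = π (b n)) ∧
    (∀ x ∈ XSgrp S (Set.univ : Set A),
      ∃ a : ↥S → A, x - PsiS S a ∈ XSgrp S (RingHom.ker π : Set A)) := by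
  refine ⟨fun a b => ⟨fun h => ?_, fun hab => ?_⟩, fun x hx => ?_⟩
  · obtain ⟨c, hc, hc'⟩ := exists_PsiS_eq_of_mem_XSgrp hS htf (RingHom.ker π) h
    exact map_eq_of_PsiS_sub_eq hS htf π hc hc'.symm
  · obtain ⟨c, hc, hc'⟩ := exists_PsiS_sub_eq hS π hab
    exact hc' ▸ PsiS_mem_XSgrp hS _ c hc
  · obtain ⟨c, -, rfl⟩ := exists_PsiS_eq_of_mem_XSgrp hS htf ⊤ (by rwa [Submodule.top_coe])
    exact ⟨c, by rw [sub_self]; exact zero_mem _⟩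

/-- Let `π : A → R` be a surjective ring homomorphism with kernel `I`, where
`A` has no `S`-torsion.  Then `Ψ_S(a) - Ψ_S(b) ∈ X_S(I)` iff `π(a_n) = π(b_n)`
for all `n ∈ S`; moreover every element of `X_S(A)` is congruent modulo
`X_S(I)` to some `Ψ_S(a)`.  Consequently `Ψ_S` induces a well-defined
bijection `ψ_S : R^S → X_S(A)/X_S(I)`. -/
theorem statement6 {A R : Type*} [CommRing A] [CommRing R] (S : Set ℕ)
    (hS : IsTruncationSet S)
    (htf : ∀ n ∈ S, Function.Injective fun x : A => (n : A) * x)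
    (π : A →+* R) (hπ : Function.Surjective π) :
    (∀ a b : ↥S → A,
      PsiS S a - PsiS S b ∈ XSgrp S (RingHom.ker π : Set A) ↔
        ∀ n : ↥S, π (a n) = π (b n)) ∧
    (∀ x ∈ XSgrp S (Set.univ : Set A),
      ∃ a : ↥S → A, x - PsiS S a ∈ XSgrp S (RingHom.ker π : Set A)) :=
  statement6_general S hS htf π
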